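/- Let M ≥ 2 be an integer and let c ∈ (0,1) be a constant such that |𝑃_M| ≥ c·M/log M, where 𝑃_M is the set of primes p with ⌈M/2⌉ < p ≤ M. Let d ≥ 1 and let f : ℝ^d → ℂ be given by an absolutely convergent Fourier series f(x) = Σ_{k∈ℤ^d} ĉ(k)·exp(2πi k·x) whose coefficients satisfy ‖f‖ := Σ_{k∈ℤ^d} |ĉ(k)|·max(1, log|k|_∞) < ∞. Then the QMC rule based on the composite Korobov point set T_{M,d}^comp satisfies |ĉ(0) − (1/N_T) Σ_{p∈𝑃_M} Σ_{n=0}^{p^2−1} f(x̃_n^{(p)})| ≤ (8d/(c·M))·‖f‖, where N_T = Σ_{p∈𝑃_M} p^2 and x̃_n^{(p)} = ({n/p^2}, {n^2/p^2}, …, {n^d/p^2}). Consequently, since N_T ≤ M^3, the error is at most (8d/(c·N_T^{1/3}))·‖f‖. -/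

import Mathlib

/-!
Expanding `f` in its Fourier series, the integration error is
`∑_{k ≠ 0} coef k · N_T⁻¹ ∑_{p ∈ 𝑃_M} S_p(k)`, where `S_p(k) = ∑_{n < p²} e(P_k(n) / p²)` and
`P_k = ∑_j k_j X^{j+1}`. Writing `n = a + p b`, Taylor's formula gives
`P_k(n) / p² ≡ P_k(a) / p² + P_k'(a) b / p (mod 1)`, so summing over `b` leaves only the roots of
`P_k'` modulo `p`: `|S_p(k)| ≤ (d - 1) p` whenever `p > d` does not divide every `k_j`.
The primes of `𝑃_M` exceed `√M` and their product over those dividing every `k_j` divides a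
nonzero coordinate of `k`, so there are at most `2 log |k|_∞ / log M` such primes, and for them
`|S_p(k)| ≤ p² ≤ M²`. With `|𝑃_M| ≥ cM / log M` and `N_T ≥ |𝑃_M| M² / 4` this bounds
`N_T⁻¹ |∑_p S_p(k)|` by `8d / (cM) · max(1, log |k|_∞)`.
-/

/-- `𝑃_M`: the set of primes `p` with `⌈M/2⌉ < p ≤ M` (note `⌈M/2⌉ = (M+1)/2` in `ℕ`). -/
def primesInDyadic (M : ℕ) : Finset ℕ :=
  (Finset.range (M + 1)).filter fun p => Nat.Prime p ∧ (M + 1) / 2 < p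

open Finset Polynomial FourierTransform

lemma Real.fourierChar_intCast (n : ℤ) : 𝐞 (n : ℝ) = 1 := by
  rw [Real.fourierChar_apply', Circle.exp_two_pi_mul_int]

lemma Real.fourierChar_intCast_add (n : ℤ) (x : ℝ) : 𝐞 (n + x) = 𝐞 x := by
  rw [AddChar.map_add_eq_mul, Real.fourierChar_intCast, one_mul]

lemma Real.fourierChar_eq_one_iff {x : ℝ} : 𝐞 x = 1 ↔ ∃ n : ℤ, x = n := by
  rw [Real.fourierChar_apply', Circle.exp_eq_one]
  refine exists_congr fun n => ?_
  constructor <;> intro h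
  · nlinarith [Real.pi_pos]
  · rw [h]; ring

lemma Real.sum_range_fourierChar_mul_div (N : ℕ) (hN : 0 < N) (k : ℤ) :
    ∑ n ∈ range N, (𝐞 (k * n / N) : ℂ) = if (N : ℤ) ∣ k then (N : ℂ) else 0 := by
  set z : ℂ := ((𝐞 (k / N) : Circle) : ℂ)
  have hpow (n : ℕ) : (𝐞 (k * n / N) : ℂ) = z ^ n := by
    rw [← Circle.coe_pow, ← AddChar.map_nsmul_eq_pow, nsmul_eq_mul]
    ring_nf
  simp_rw [hpow]
  have hN' : (N : ℝ) ≠ 0 := by positivity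
  split_ifs with hdvd
  · obtain ⟨m, rfl⟩ := hdvd
    have hz : z = 1 := by
      simp only [z, Int.cast_mul, Int.cast_natCast, mul_div_cancel_left₀ _ hN',
        Real.fourierChar_intCast, Circle.coe_one]
    simp [hz]
  · have hz : z ≠ 1 := by
      intro h
      obtain ⟨n, hn⟩ := Real.fourierChar_eq_one_iff.1 (Circle.coe_eq_one.1 h)
      exact hdvd ⟨n, by exact_mod_cast (div_eq_iff hN').1 hn |>.trans (mul_comm _ _)⟩
    have hzN : z ^ N = 1 := by
      rw [← hpow, mul_div_cancel_right₀ _ hN', Real.fourierChar_intCast, Circle.coe_one]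
    rw [geom_sum_eq hz, hzN, sub_self, zero_div]

lemma Finset.sum_range_mul_eq_sum_sum {M : Type*} [AddCommMonoid M] (f : ℕ → M) (m n : ℕ) :
    ∑ i ∈ range (m * n), f i = ∑ a ∈ range n, ∑ b ∈ range m, f (a + n * b) := by
  rw [Finset.sum_range, ← finProdFinEquiv.sum_comp, Fintype.sum_prod_type, Finset.sum_comm,
    Finset.sum_range]
  refine Fintype.sum_congr _ _ fun a => ?_
  rw [Finset.sum_range]
  rfl

lemma sum_range_sq_fourierChar_eval (P : ℤ[X]) (N : ℕ) (hN : 0 < N) :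
    ∑ n ∈ range (N ^ 2), (𝐞 (P.eval (n : ℤ) / (N ^ 2 : ℕ)) : ℂ) =
      N * ∑ a ∈ range N with (N : ℤ) ∣ P.derivative.eval ((a : ℕ) : ℤ),
        (𝐞 (P.eval (a : ℤ) / (N ^ 2 : ℕ)) : ℂ) := by
  rw [sq, Finset.sum_range_mul_eq_sum_sum, Finset.sum_filter, Finset.mul_sum]
  refine Finset.sum_congr rfl fun a _ => ?_
  have hN' : (N : ℝ) ≠ 0 := by positivity
  have hphase (b : ℕ) : (𝐞 (P.eval ((a + N * b : ℕ) : ℤ) / (N * N : ℕ)) : ℂ) =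
      𝐞 (P.eval (a : ℤ) / (N * N : ℕ)) * 𝐞 (P.derivative.eval (a : ℤ) * b / N) := by
    obtain ⟨t, ht⟩ := P.binomExpansion (a : ℤ) (N * b : ℕ)
    have harg : ((P.eval ((a + N * b : ℕ) : ℤ) : ℤ) : ℝ) / (N * N : ℕ) = ((t * b ^ 2 : ℤ) : ℝ) +
        ((P.eval (a : ℤ) : ℤ) / (N * N : ℕ) + (P.derivative.eval (a : ℤ) : ℤ) * b / N) := by
      rw [Nat.cast_add, ht]
      push_cast
      field_simp
      ring
    rw [harg, Real.fourierChar_intCast_add, AddChar.map_add_eq_mul, Circle.coe_mul]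
  simp_rw [hphase, ← Finset.mul_sum, Real.sum_range_fourierChar_mul_div N hN]
  split_ifs <;> simp [mul_comm]

lemma norm_sum_range_sq_fourierChar_eval_le (P : ℤ[X]) (N : ℕ) (hN : 0 < N) :
    ‖∑ n ∈ range (N ^ 2), (𝐞 (P.eval (n : ℤ) / (N ^ 2 : ℕ)) : ℂ)‖ ≤
      N * #{a ∈ range N | (N : ℤ) ∣ P.derivative.eval ((a : ℕ) : ℤ)} := by
  rw [sum_range_sq_fourierChar_eval P N hN, norm_mul, Complex.norm_natCast]
  gcongr
  exact (norm_sum_le _ _).trans (by simp [Circle.norm_coe])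

lemma Polynomial.card_filter_range_dvd_eval_le (p : ℕ) [Fact p.Prime] (Q : ℤ[X])
    (hQ : Q.map (Int.castRingHom (ZMod p)) ≠ 0) :
    #{a ∈ range p | (p : ℤ) ∣ Q.eval ((a : ℕ) : ℤ)} ≤ Q.natDegree := by
  set Qp := Q.map (Int.castRingHom (ZMod p))
  calc #{a ∈ range p | (p : ℤ) ∣ Q.eval ((a : ℕ) : ℤ)}
      ≤ #Qp.roots.toFinset := by
        refine Finset.card_le_card_of_injOn (fun a : ℕ => (a : ZMod p)) (fun a ha => ?_) ?_
        · rw [Finset.mem_coe, Finset.mem_filter] at ha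
          rw [Finset.mem_coe, Multiset.mem_toFinset, mem_roots hQ, IsRoot, eval_natCast_map,
            eq_intCast, ZMod.intCast_zmod_eq_zero_iff_dvd]
          exact ha.2
        · intro a ha b hb hab
          rw [Finset.mem_coe, Finset.mem_filter, Finset.mem_range] at ha hb
          simpa [ZMod.val_cast_of_lt ha.1, ZMod.val_cast_of_lt hb.1] using congrArg ZMod.val hab
    _ ≤ Multiset.card Qp.roots := Multiset.toFinset_card_le _
    _ ≤ Qp.natDegree := card_roots' _
    _ ≤ Q.natDegree := natDegree_map_le

lemma norm_sub_tsum_mul_le {ι R : Type*} [NormedRing R] [CompleteSpace R] (a T : ι → R)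
    (w : ι → ℝ) (i₀ : ι) {B : ℝ} (hB : 0 ≤ B) (hw : 0 ≤ w i₀)
    (ha : Summable fun i => ‖a i‖ * w i) (hT₀ : T i₀ = 1) (hT : ∀ i ≠ i₀, ‖T i‖ ≤ B * w i) :
    ‖a i₀ - ∑' i, a i * T i‖ ≤ B * ∑' i, ‖a i‖ * w i := by
  classical
  have hterm (i : ι) (hi : i ≠ i₀) : ‖a i * T i‖ ≤ B * (‖a i‖ * w i) :=
    calc ‖a i * T i‖ ≤ ‖a i‖ * (B * w i) := (norm_mul_le _ _).trans (by gcongr; exact hT i hi)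
      _ = B * (‖a i‖ * w i) := by ring
  have hrest (i : ι) : ‖ite (i = i₀) 0 (a i * T i)‖ ≤ B * (‖a i‖ * w i) := by
    split_ifs with hi
    · rw [norm_zero, hi]; positivity
    · exact hterm i hi
  have haT : Summable fun i => a i * T i :=
    (ha.mul_left B).of_norm_bounded_eventually ((Filter.eventually_cofinite_ne i₀).mono hterm)
  have hrest_summable := (ha.mul_left B).of_nonneg_of_le (fun _ => norm_nonneg _) hrest
  rw [haT.tsum_eq_add_tsum_ite i₀, hT₀, mul_one, sub_add_cancel_left, norm_neg, ← tsum_mul_left]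
  exact (norm_tsum_le_tsum_norm hrest_summable).trans
    (hrest_summable.tsum_le_tsum hrest (ha.mul_left B))

lemma Complex.exp_two_pi_I_mul (x : ℝ) : Complex.exp (2 * Real.pi * Complex.I * x) = 𝐞 x := by
  rw [Real.fourierChar_apply]
  push_cast
  ring_nf

lemma Real.fourierChar_sum_mul_fract {ι : Type*} (s : Finset ι) (k : ι → ℤ) (y : ι → ℝ) :
    𝐞 (∑ j ∈ s, k j * Int.fract (y j)) = 𝐞 (∑ j ∈ s, k j * y j) := by
  rw [← Real.fourierChar_intCast_add (∑ j ∈ s, k j * ⌊y j⌋)]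
  simp only [Int.fract, mul_sub, sum_sub_distrib]
  push_cast
  ring_nf

noncomputable def korobovPoly {d : ℕ} (k : Fin d → ℤ) : ℤ[X] := ∑ j, C (k j) * X ^ ((j : ℕ) + 1)

section korobovPoly

variable {d : ℕ} (k : Fin d → ℤ)

lemma eval_korobovPoly (n : ℤ) : (korobovPoly k).eval n = ∑ j, k j * n ^ ((j : ℕ) + 1) := by
  simp [korobovPoly, eval_finsetSum]

lemma natDegree_korobovPoly_le : (korobovPoly k).natDegree ≤ d :=
  natDegree_sum_le_of_forall_le _ _ fun j _ => (natDegree_C_mul_X_pow_le _ _).trans j.isLt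

lemma natDegree_derivative_korobovPoly_le : (korobovPoly k).derivative.natDegree ≤ d - 1 :=
  (natDegree_derivative_le _).trans (Nat.sub_le_sub_right (natDegree_korobovPoly_le k) 1)

lemma coeff_derivative_korobovPoly (j : Fin d) :
    (korobovPoly k).derivative.coeff j = k j * ((j : ℕ) + 1) := by
  rw [coeff_derivative, korobovPoly, finsetSum_coeff]
  simp [Fin.val_inj]

lemma map_derivative_korobovPoly_ne_zero {p : ℕ} [Fact p.Prime] (hdp : d < p)
    (hk : ¬ ∀ j, (p : ℤ) ∣ k j) :
    (korobovPoly k).derivative.map (Int.castRingHom (ZMod p)) ≠ 0 := by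
  push Not at hk
  obtain ⟨j, hj⟩ := hk
  refine ne_of_apply_ne (coeff · j) ?_
  rw [coeff_map, coeff_derivative_korobovPoly, coeff_zero, eq_intCast, Ne,
    ZMod.intCast_zmod_eq_zero_iff_dvd, (Nat.prime_iff_prime_int.mp Fact.out).dvd_mul]
  refine not_or.2 ⟨hj, fun h => ?_⟩
  have := Nat.le_of_dvd j.succ_pos (by exact_mod_cast h)
  omega

end korobovPoly

noncomputable def korobovSum {d : ℕ} (k : Fin d → ℤ) (p : ℕ) : ℂ :=
  ∑ n ∈ range (p ^ 2), (𝐞 ((korobovPoly k).eval (n : ℤ) / (p ^ 2 : ℕ)) : ℂ)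

section korobovSum

variable {d : ℕ} (k : Fin d → ℤ) (p : ℕ)

lemma korobovSum_zero : korobovSum (0 : Fin d → ℤ) p = (p : ℂ) ^ 2 := by
  simp [korobovSum, korobovPoly]

lemma norm_korobovSum_le_sq : ‖korobovSum k p‖ ≤ (p : ℝ) ^ 2 :=
  (norm_sum_le _ _).trans (by simp [Circle.norm_coe])

lemma norm_korobovSum_le_of_not_forall_dvd (hp : p.Prime) (hk : ¬ ∀ j, (p : ℤ) ∣ k j) :
    ‖korobovSum k p‖ ≤ 2 * ((d : ℝ) - 1) * p := by
  have hd : 1 ≤ d := (not_forall.1 hk).choose.pos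
  rcases le_or_gt p d with hpd | hdp
  · have hp2 : (2 : ℝ) ≤ p := by exact_mod_cast hp.two_le
    have hpd : (p : ℝ) ≤ d := by exact_mod_cast hpd
    calc ‖korobovSum k p‖ ≤ (p : ℝ) ^ 2 := norm_korobovSum_le_sq k p
      _ ≤ 2 * ((d : ℝ) - 1) * p := by nlinarith
  · have : Fact p.Prime := ⟨hp⟩
    have hroots := card_filter_range_dvd_eval_le p _
      (map_derivative_korobovPoly_ne_zero k hdp hk)
    have hdeg : ((korobovPoly k).derivative.natDegree : ℝ) ≤ (d : ℝ) - 1 := by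
      rw [← Nat.cast_one, ← Nat.cast_sub hd]
      exact_mod_cast natDegree_derivative_korobovPoly_le k
    calc ‖korobovSum k p‖ ≤ p * ((d : ℝ) - 1) :=
          (norm_sum_range_sq_fourierChar_eval_le _ p hp.pos).trans
            (by gcongr; exact (Nat.cast_le.2 hroots).trans hdeg)
      _ ≤ 2 * ((d : ℝ) - 1) * p := by nlinarith [show (1 : ℝ) ≤ d by exact_mod_cast hd]

end korobovSum

section primesInDyadic

variable {M p : ℕ}

lemma mem_primesInDyadic : p ∈ primesInDyadic M ↔ p ≤ M ∧ p.Prime ∧ (M + 1) / 2 < p := by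
  simp [primesInDyadic]

lemma lt_two_mul_of_mem_primesInDyadic (hp : p ∈ primesInDyadic M) : M < 2 * p := by
  have := (mem_primesInDyadic.1 hp).2.2
  omega

lemma lt_sq_of_mem_primesInDyadic (hp : p ∈ primesInDyadic M) : M < p ^ 2 := by
  have := (mem_primesInDyadic.1 hp).2.1.two_le
  nlinarith [lt_two_mul_of_mem_primesInDyadic hp]

lemma card_primesInDyadic_mul_sq_le (M : ℕ) :
    #(primesInDyadic M) * M ^ 2 ≤ 4 * ∑ p ∈ primesInDyadic M, p ^ 2 := by
  rw [← smul_eq_mul, ← sum_const, mul_sum]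
  exact sum_le_sum fun p hp => by nlinarith [lt_two_mul_of_mem_primesInDyadic hp]

lemma sum_sq_primesInDyadic_le (M : ℕ) : ∑ p ∈ primesInDyadic M, p ^ 2 ≤ M ^ 3 := by
  have hsub : primesInDyadic M ⊆ Icc 1 M := fun p hp => by
    obtain ⟨hpM, hp, -⟩ := mem_primesInDyadic.1 hp
    exact mem_Icc.2 ⟨hp.one_le, hpM⟩
  calc ∑ p ∈ primesInDyadic M, p ^ 2 ≤ ∑ _p ∈ primesInDyadic M, M ^ 2 :=
        sum_le_sum fun p hp => Nat.pow_le_pow_left (mem_primesInDyadic.1 hp).1 2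
    _ ≤ M * M ^ 2 := by
        rw [sum_const, smul_eq_mul]
        gcongr
        simpa using card_le_card hsub
    _ = M ^ 3 := by ring

lemma rpow_one_third_sum_sq_primesInDyadic_le (M : ℕ) :
    ((∑ p ∈ primesInDyadic M, p ^ 2 : ℕ) : ℝ) ^ ((1 : ℝ) / 3) ≤ M :=
  calc ((∑ p ∈ primesInDyadic M, p ^ 2 : ℕ) : ℝ) ^ ((1 : ℝ) / 3)
      ≤ ((M : ℝ) ^ 3) ^ ((1 : ℝ) / 3) := by
        gcongr
        exact_mod_cast sum_sq_primesInDyadic_le M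
    _ = M := by
        rw [one_div]
        exact_mod_cast Real.pow_rpow_inv_natCast (Nat.cast_nonneg M) three_ne_zero

lemma primesInDyadic_nonempty (hM : 2 ≤ M) {c : ℝ} (hc0 : 0 < c)
    (hcard : c * M / Real.log M ≤ #(primesInDyadic M)) : (primesInDyadic M).Nonempty := by
  have hlog := Real.log_pos (show (1 : ℝ) < M by exact_mod_cast hM)
  rw [← card_pos, ← Nat.cast_pos (α := ℝ)]
  exact lt_of_lt_of_le (by positivity) hcard

end primesInDyadic

noncomputable def logWeight {d : ℕ} (k : Fin d → ℤ) : ℝ :=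
  max 1 (Real.log ((Finset.univ.sup fun j : Fin d => (k j).natAbs : ℕ) : ℝ))

lemma one_le_logWeight {d : ℕ} (k : Fin d → ℤ) : 1 ≤ logWeight k := le_max_left _ _

lemma logWeight_nonneg {d : ℕ} (k : Fin d → ℤ) : 0 ≤ logWeight k :=
  zero_le_one.trans (one_le_logWeight k)

lemma card_filter_forall_dvd_mul_log_le {M d : ℕ} (hM : 0 < M) {k : Fin d → ℤ} (hk : k ≠ 0) :
    (#{p ∈ primesInDyadic M | ∀ j, ((p : ℕ) : ℤ) ∣ k j} : ℝ) * Real.log M ≤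
      2 * Real.log (univ.sup fun j => (k j).natAbs : ℕ) := by
  set B := {p ∈ primesInDyadic M | ∀ j, ((p : ℕ) : ℤ) ∣ k j}
  set K := univ.sup fun j => (k j).natAbs
  obtain ⟨j₀, hj₀⟩ := Function.ne_iff.1 hk
  have hprod : ∏ p ∈ B, p ∣ (k j₀).natAbs :=
    prod_primes_dvd _ (fun p hp => (mem_primesInDyadic.1 (mem_filter.1 hp).1).2.1.prime)
      fun p hp => Int.natCast_dvd.1 ((mem_filter.1 hp).2 j₀)
  have hpow : M ^ #B ≤ K ^ 2 :=
    calc M ^ #B = ∏ _p ∈ B, M := (prod_const M).symm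
      _ ≤ ∏ p ∈ B, p ^ 2 :=
          prod_le_prod' fun p hp => (lt_sq_of_mem_primesInDyadic (mem_filter.1 hp).1).le
      _ = (∏ p ∈ B, p) ^ 2 := prod_pow _ _ _
      _ ≤ K ^ 2 := by
          gcongr
          exact (Nat.le_of_dvd (Int.natAbs_pos.2 hj₀) hprod).trans
            (le_sup (f := fun j => (k j).natAbs) (mem_univ j₀))
  calc (#B : ℝ) * Real.log M = Real.log ((M : ℝ) ^ #B) := (Real.log_pow _ _).symm
    _ ≤ Real.log ((K : ℝ) ^ 2) := Real.log_le_log (by positivity) (by exact_mod_cast hpow)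
    _ = 2 * Real.log K := by rw [Real.log_pow, Nat.cast_ofNat]

lemma sum_norm_korobovSum_le {M : ℕ} (hM : 2 ≤ M) {c : ℝ} (hc0 : 0 < c) (hc1 : c ≤ 1)
    (hcard : c * M / Real.log M ≤ #(primesInDyadic M)) {d : ℕ} {k : Fin d → ℤ} (hk : k ≠ 0) :
    ∑ p ∈ primesInDyadic M, ‖korobovSum k p‖ ≤
      8 * d / (c * M) * logWeight k * (∑ p ∈ primesInDyadic M, p ^ 2 : ℕ) := by
  set P := primesInDyadic M
  set B := {p ∈ P | ∀ j, ((p : ℕ) : ℤ) ∣ k j}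
  set N := ∑ p ∈ P, p ^ 2
  have hd : (1 : ℝ) ≤ d := by exact_mod_cast (Function.ne_iff.1 hk).choose.pos
  have hlog : 0 < Real.log M := Real.log_pos (by exact_mod_cast hM)
  have hsplit : ∑ p ∈ P, ‖korobovSum k p‖ ≤ 2 * (d - 1) * #P * M + #B * M ^ 2 := by
    rw [← sum_filter_not_add_sum_filter P (fun p => ∀ j, ((p : ℕ) : ℤ) ∣ k j)]
    gcongr ?_ + ?_
    · calc _ ≤ ∑ p ∈ P with ¬ ∀ j, ((p : ℕ) : ℤ) ∣ k j, 2 * ((d : ℝ) - 1) * M := by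
            refine sum_le_sum fun p hp => ?_
            obtain ⟨hpP, hpk⟩ := mem_filter.1 hp
            obtain ⟨hpM, hp, -⟩ := mem_primesInDyadic.1 hpP
            refine (norm_korobovSum_le_of_not_forall_dvd k p hp hpk).trans ?_
            gcongr
        _ ≤ #P * (2 * ((d : ℝ) - 1) * M) := by
            rw [sum_const, nsmul_eq_mul]
            gcongr
            exact filter_subset _ _
        _ = 2 * (d - 1) * #P * M := by ring
    · calc _ ≤ ∑ _p ∈ B, (M : ℝ) ^ 2 := by
            refine sum_le_sum fun p hp => (norm_korobovSum_le_sq k p).trans ?_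
            gcongr
            exact_mod_cast (mem_primesInDyadic.1 (mem_filter.1 hp).1).1
        _ = #B * M ^ 2 := by rw [sum_const, nsmul_eq_mul]
  have hP : c * M ≤ #P * Real.log M := (div_le_iff₀ hlog).1 hcard
  have hPN : (#P : ℝ) * M ^ 2 ≤ 4 * N := by exact_mod_cast card_primesInDyadic_mul_sq_le M
  have hB : #B * Real.log M ≤ 2 * logWeight k :=
    (card_filter_forall_dvd_mul_log_le (by omega) hk).trans (by gcongr; exact le_max_right _ _)
  have hw := one_le_logWeight k
  rw [div_mul_eq_mul_div, div_mul_eq_mul_div, le_div_iff₀ (by positivity)]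
  calc (∑ p ∈ P, ‖korobovSum k p‖) * (c * M)
      ≤ (2 * (d - 1) * #P * M + #B * M ^ 2) * (c * M) := by gcongr
    _ = 2 * c * (d - 1) * (#P * M ^ 2) + #B * M ^ 2 * (c * M) := by ring
    _ ≤ 2 * logWeight k * (d - 1) * (4 * N) + #B * M ^ 2 * (#P * Real.log M) := by
        gcongr
        linarith
    _ = 8 * (d - 1) * logWeight k * N + (#B * Real.log M) * (#P * M ^ 2) := by ring
    _ ≤ 8 * (d - 1) * logWeight k * N + (2 * logWeight k) * (4 * N) := by gcongr
    _ = 8 * d * logWeight k * N := by ring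

section KorobovNodes

variable {d : ℕ} (f : (Fin d → ℝ) → ℂ) (coef : (Fin d → ℤ) → ℂ)
  (hf : ∀ x : Fin d → ℝ, f x = ∑' k : Fin d → ℤ,
      coef k * Complex.exp (2 * Real.pi * Complex.I * ∑ j : Fin d, (k j : ℂ) * (x j : ℂ)))
include hf

lemma apply_korobov_node (p n : ℕ) :
    f (fun j : Fin d => Int.fract ((n : ℝ) ^ ((j : ℕ) + 1) / (p ^ 2 : ℕ))) =
      ∑' k, coef k * 𝐞 ((korobovPoly k).eval (n : ℤ) / (p ^ 2 : ℕ)) := by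
  rw [hf]
  refine tsum_congr fun k => ?_
  congr 1
  have hphase : ∑ j, (k j : ℂ) * ((Int.fract ((n : ℝ) ^ ((j : ℕ) + 1) / (p ^ 2 : ℕ)) : ℝ) : ℂ) =
      ((∑ j, (k j : ℝ) * Int.fract ((n : ℝ) ^ ((j : ℕ) + 1) / (p ^ 2 : ℕ)) : ℝ) : ℂ) := by
    push_cast; rfl
  rw [hphase, Complex.exp_two_pi_I_mul, Real.fourierChar_sum_mul_fract, eval_korobovPoly]
  push_cast
  simp_rw [sum_div, mul_div_assoc]

lemma sum_korobov_nodes_eq_tsum (hcoef : Summable fun k => ‖coef k‖) (P : Finset ℕ) :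
    ∑ p ∈ P, ∑ n ∈ range (p ^ 2),
        f (fun j : Fin d => Int.fract ((n : ℝ) ^ ((j : ℕ) + 1) / (p ^ 2 : ℕ))) =
      ∑' k, coef k * ∑ p ∈ P, korobovSum k p := by
  have hsummable (p n : ℕ) :
      Summable fun k => coef k * 𝐞 ((korobovPoly k).eval (n : ℤ) / (p ^ 2 : ℕ)) :=
    hcoef.of_norm_bounded fun k => by simp [Circle.norm_coe]
  simp_rw [apply_korobov_node f coef hf, korobovSum, mul_sum]
  calc _ = ∑ p ∈ P, ∑' k, ∑ n ∈ range (p ^ 2),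
          coef k * 𝐞 ((korobovPoly k).eval (n : ℤ) / (p ^ 2 : ℕ)) :=
        sum_congr rfl fun p _ => (Summable.tsum_finsetSum fun n _ => hsummable p n).symm
    _ = _ := (Summable.tsum_finsetSum fun p _ => summable_sum fun n _ => hsummable p n).symm

end KorobovNodes

theorem composite_korobov_T_worst_case_error_general (M : ℕ) (hM : 2 ≤ M)
    (c : ℝ) (hc0 : 0 < c) (hc1 : c < 1)
    (hcard : c * M / Real.log M ≤ ((primesInDyadic M).card : ℝ))
    (d : ℕ)
    (f : (Fin d → ℝ) → ℂ) (coef : (Fin d → ℤ) → ℂ)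
    (hnorm : Summable fun k : Fin d → ℤ =>
      ‖coef k‖ *
        max 1 (Real.log ((Finset.univ.sup fun j : Fin d => (k j).natAbs : ℕ) : ℝ)))
    (hf : ∀ x : Fin d → ℝ, f x = ∑' k : Fin d → ℤ,
      coef k * Complex.exp (2 * Real.pi * Complex.I * ∑ j : Fin d, (k j : ℂ) * (x j : ℂ))) :
    ‖coef 0 - (1 / ((∑ p ∈ primesInDyadic M, p ^ 2 : ℕ) : ℂ)) *
        ∑ p ∈ primesInDyadic M, ∑ n ∈ Finset.range (p ^ 2),
          f (fun j : Fin d => Int.fract ((n : ℝ) ^ ((j : ℕ) + 1) / (p ^ 2 : ℕ)))‖ ≤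
      8 * d / (c * M) *
        (∑' k : Fin d → ℤ, ‖coef k‖ *
          max 1 (Real.log ((Finset.univ.sup fun j : Fin d => (k j).natAbs : ℕ) : ℝ))) ∧
    ‖coef 0 - (1 / ((∑ p ∈ primesInDyadic M, p ^ 2 : ℕ) : ℂ)) *
        ∑ p ∈ primesInDyadic M, ∑ n ∈ Finset.range (p ^ 2),
          f (fun j : Fin d => Int.fract ((n : ℝ) ^ ((j : ℕ) + 1) / (p ^ 2 : ℕ)))‖ ≤
      8 * d / (c * ((∑ p ∈ primesInDyadic M, p ^ 2 : ℕ) : ℝ) ^ ((1 : ℝ) / 3)) *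
        (∑' k : Fin d → ℤ, ‖coef k‖ *
          max 1 (Real.log ((Finset.univ.sup fun j : Fin d => (k j).natAbs : ℕ) : ℝ))) := by
  set N := ∑ p ∈ primesInDyadic M, p ^ 2
  have hcoef : Summable fun k => ‖coef k‖ := hnorm.of_nonneg_of_le (fun _ => norm_nonneg _)
    fun k => le_mul_of_one_le_right (norm_nonneg _) (one_le_logWeight k)
  have hN : 0 < N := sum_pos (fun p hp => pow_pos (mem_primesInDyadic.1 hp).2.1.pos 2)
    (primesInDyadic_nonempty hM hc0 hcard)
  have hT₀ : 1 / (N : ℂ) * ∑ p ∈ primesInDyadic M, korobovSum (0 : Fin d → ℤ) p = 1 := by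
    simp only [korobovSum_zero, N]
    push_cast
    exact one_div_mul_cancel (by exact_mod_cast hN.ne')
  have hT (k : Fin d → ℤ) (hk : k ≠ 0) :
      ‖1 / (N : ℂ) * ∑ p ∈ primesInDyadic M, korobovSum k p‖ ≤ 8 * d / (c * M) * logWeight k := by
    rw [norm_mul, norm_div, norm_one, Complex.norm_natCast, div_mul_eq_mul_div, one_mul,
      div_le_iff₀ (by exact_mod_cast hN)]
    exact (norm_sum_le _ _).trans (sum_norm_korobovSum_le hM hc0 hc1.le hcard hk)
  have hmain := norm_sub_tsum_mul_le coef _ logWeight 0 (by positivity) (logWeight_nonneg 0)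
    hnorm hT₀ hT
  simp_rw [mul_left_comm (coef _), tsum_mul_left,
    ← sum_korobov_nodes_eq_tsum f coef hf hcoef] at hmain
  refine ⟨hmain, hmain.trans (mul_le_mul_of_nonneg_right ?_
    (tsum_nonneg fun k => mul_nonneg (norm_nonneg _) (logWeight_nonneg k)))⟩
  gcongr
  exact rpow_one_third_sum_sq_primesInDyadic_le M

/-- Let `M ≥ 2`, `c ∈ (0,1)` with `|𝑃_M| ≥ c·M/log M`, `d ≥ 1`, and let
`f` be given by an absolutely convergent Fourier series with coefficients `coef` whose
weighted norm `‖f‖ = ∑_{k∈ℤᵈ} |coef k| max(1, log|k|_∞)` is finite. Then the QMC rule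
based on the composite Korobov point set `T_{M,d}^comp` satisfies
`|coef 0 − (1/N_T) ∑_{p∈𝑃_M} ∑_{n=0}^{p²-1} f(x̃ₙ⁽ᵖ⁾)| ≤ (8d/(cM))·‖f‖`, and consequently
(since `N_T ≤ M³`) the error is at most `(8d/(c·N_T^{1/3}))·‖f‖`. -/
theorem composite_korobov_T_worst_case_error (M : ℕ) (hM : 2 ≤ M)
    (c : ℝ) (hc0 : 0 < c) (hc1 : c < 1)
    (hcard : c * M / Real.log M ≤ ((primesInDyadic M).card : ℝ))
    (d : ℕ) (hd : 1 ≤ d)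
    (f : (Fin d → ℝ) → ℂ) (coef : (Fin d → ℤ) → ℂ)
    (hnorm : Summable fun k : Fin d → ℤ =>
      ‖coef k‖ *
        max 1 (Real.log ((Finset.univ.sup fun j : Fin d => (k j).natAbs : ℕ) : ℝ)))
    (hf : ∀ x : Fin d → ℝ, f x = ∑' k : Fin d → ℤ,
      coef k * Complex.exp (2 * Real.pi * Complex.I * ∑ j : Fin d, (k j : ℂ) * (x j : ℂ))) :
    ‖coef 0 - (1 / ((∑ p ∈ primesInDyadic M, p ^ 2 : ℕ) : ℂ)) *
        ∑ p ∈ primesInDyadic M, ∑ n ∈ Finset.range (p ^ 2),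
          f (fun j : Fin d => Int.fract ((n : ℝ) ^ ((j : ℕ) + 1) / (p ^ 2 : ℕ)))‖ ≤
      8 * d / (c * M) *
        (∑' k : Fin d → ℤ, ‖coef k‖ *
          max 1 (Real.log ((Finset.univ.sup fun j : Fin d => (k j).natAbs : ℕ) : ℝ))) ∧
    ‖coef 0 - (1 / ((∑ p ∈ primesInDyadic M, p ^ 2 : ℕ) : ℂ)) *
        ∑ p ∈ primesInDyadic M, ∑ n ∈ Finset.range (p ^ 2),
          f (fun j : Fin d => Int.fract ((n : ℝ) ^ ((j : ℕ) + 1) / (p ^ 2 : ℕ)))‖ ≤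
      8 * d / (c * ((∑ p ∈ primesInDyadic M, p ^ 2 : ℕ) : ℝ) ^ ((1 : ℝ) / 3)) *
        (∑' k : Fin d → ℤ, ‖coef k‖ *
          max 1 (Real.log ((Finset.univ.sup fun j : Fin d => (k j).natAbs : ℕ) : ℝ))) :=
  composite_korobov_T_worst_case_error_general M hM c hc0 hc1 hcard d f coef hnorm hf
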